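/- Let C be the 4×4 complex matrix with rows (0, −(1+i)/4, −1/4, 0), (0, 0, 1/4, (−1+i)/4), (0, 0, 0, 1/4), (0, 0, 0, 0). Then: (i) C is nilpotent and ‖C‖ < 1; (ii) P_C(x,y) = det(I − xC − yC*) = 1 − (7/16)xy + (1/32)x²y² for all x, y ∈ ℂ, so P_C depends only on xy; (iii) there is NO single-variable polynomial q with Q_C(x,y) = det(I − xC − yC* − xy(I − C*C)) = q(xy) for all x, y ∈ ℂ, i.e. Q_C does not depend only on xy. -/

import Mathlib

open Matrix Complex

/-- The matrix of Example 5.5. -/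
noncomputable def Cex : Matrix (Fin 4) (Fin 4) ℂ :=
  !![0, -(1 + Complex.I)/4, -1/4, 0;
     0, 0, 1/4, (-1 + Complex.I)/4;
     0, 0, 0, 1/4;
     0, 0, 0, 0]

/-- `P_C(x, y) = det(I - x C - y Cᴴ)`. -/
noncomputable def Pfun {n : ℕ} (C : Matrix (Fin n) (Fin n) ℂ) (x y : ℂ) : ℂ :=
  Matrix.det ((1 : Matrix (Fin n) (Fin n) ℂ) - x • C - y • Cᴴ)

/-- `Q_C(x, y) = det(I - x C - y Cᴴ - x y (I - Cᴴ C))`. -/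
noncomputable def Qfun {n : ℕ} (C : Matrix (Fin n) (Fin n) ℂ) (x y : ℂ) : ℂ :=
  Matrix.det ((1 : Matrix (Fin n) (Fin n) ℂ) - x • C - y • Cᴴ
    - (x * y) • ((1 : Matrix (Fin n) (Fin n) ℂ) - Cᴴ * C))

set_option maxHeartbeats 1000000 in
theorem det_fin_four' {R : Type*} [CommRing R] (A : Matrix (Fin 4) (Fin 4) R) :
    det A =
      A 0 0 * (A 1 1 * A 2 2 * A 3 3 - A 1 1 * A 2 3 * A 3 2 - A 1 2 * A 2 1 * A 3 3
        + A 1 2 * A 2 3 * A 3 1 + A 1 3 * A 2 1 * A 3 2 - A 1 3 * A 2 2 * A 3 1)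
      - A 0 1 * (A 1 0 * A 2 2 * A 3 3 - A 1 0 * A 2 3 * A 3 2 - A 1 2 * A 2 0 * A 3 3
        + A 1 2 * A 2 3 * A 3 0 + A 1 3 * A 2 0 * A 3 2 - A 1 3 * A 2 2 * A 3 0)
      + A 0 2 * (A 1 0 * A 2 1 * A 3 3 - A 1 0 * A 2 3 * A 3 1 - A 1 1 * A 2 0 * A 3 3
        + A 1 1 * A 2 3 * A 3 0 + A 1 3 * A 2 0 * A 3 1 - A 1 3 * A 2 1 * A 3 0)
      - A 0 3 * (A 1 0 * A 2 1 * A 3 2 - A 1 0 * A 2 2 * A 3 1 - A 1 1 * A 2 0 * A 3 2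
        + A 1 1 * A 2 2 * A 3 0 + A 1 2 * A 2 0 * A 3 1 - A 1 2 * A 2 1 * A 3 0) := by
  rw [Matrix.det_succ_row_zero, Fin.sum_univ_four]
  norm_num [Matrix.det_fin_three, Matrix.submatrix_apply, Fin.succAbove, Fin.lt_def,
    show (Fin.succ 2 : Fin 4) = 3 from rfl, show ((3:Fin 4):ℕ) = 3 from rfl,
    show (Fin.castSucc 2 : Fin 4) = 2 from rfl]
  ring

set_option maxHeartbeats 1000000 in
lemma Cex_nilpotent : IsNilpotent Cex := by
  refine ⟨4, ?_⟩
  have h4 : Cex ^ 4 = (Cex * Cex) * (Cex * Cex) := by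
    rw [pow_succ, pow_succ, pow_succ, pow_one, mul_assoc]
  rw [h4]
  have h2 : Cex * Cex = !![0, 0, -(1+Complex.I)/16, (1:ℂ)/16;
      0, 0, 0, 1/16; 0,0,0,0; 0,0,0,0] := by
    ext i j
    fin_cases i <;> fin_cases j <;>
      simp [Cex, Matrix.mul_apply, Fin.sum_univ_four, Matrix.vecHead, Matrix.vecTail] <;>
      first
        | ring1
        | linear_combination (-1/16 : ℂ) * Complex.I_sq
        | linear_combination (1/16 : ℂ) * Complex.I_sq
  rw [h2]
  ext i j
  fin_cases i <;> fin_cases j <;>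
    simp [Matrix.mul_apply, Fin.sum_univ_four, Matrix.vecHead, Matrix.vecTail]

set_option maxHeartbeats 1000000 in
lemma Cex_norm_lt_one : ‖Matrix.toEuclideanCLM (𝕜 := ℂ) Cex‖ < 1 := by
  have h : ‖Matrix.toEuclideanCLM (𝕜 := ℂ) Cex‖ ≤ 7/8 := by
    apply ContinuousLinearMap.opNorm_le_bound _ (by norm_num : (0:ℝ) ≤ 7/8)
    intro v
    set w : Fin 4 → ℂ := WithLp.equiv 2 (Fin 4 → ℂ) v with hw
    have h1 : ‖(toEuclideanCLM (𝕜 := ℂ) Cex) v‖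
        = Real.sqrt (∑ i, ‖Cex.mulVec w i‖ ^ 2) := by
      rw [show (toEuclideanCLM (𝕜 := ℂ) Cex) v
          = (WithLp.equiv 2 (Fin 4 → ℂ)).symm (Cex.mulVec w) from rfl,
        EuclideanSpace.norm_eq]
      rfl
    have h2 : ‖v‖ = Real.sqrt (∑ i, ‖w i‖ ^ 2) := by
      rw [EuclideanSpace.norm_eq]; rfl
    rw [h1, h2]
    have hm0 : Cex.mulVec w 0 = -(1 + Complex.I)/4 * w 1 + (-1/4) * w 2 := by
      simp [Cex, Matrix.mulVec, dotProduct, Fin.sum_univ_four, Matrix.vecHead, Matrix.vecTail]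
    have hm1 : Cex.mulVec w 1 = (1/4) * w 2 + (-1 + Complex.I)/4 * w 3 := by
      simp [Cex, Matrix.mulVec, dotProduct, Fin.sum_univ_four, Matrix.vecHead, Matrix.vecTail]
    have hm2 : Cex.mulVec w 2 = (1/4) * w 3 := by
      simp [Cex, Matrix.mulVec, dotProduct, Fin.sum_univ_four, Matrix.vecHead, Matrix.vecTail]
    have hm3 : Cex.mulVec w 3 = 0 := by
      simp [Cex, Matrix.mulVec, dotProduct, Fin.sum_univ_four, Matrix.vecHead, Matrix.vecTail]
    rw [Fin.sum_univ_four, Fin.sum_univ_four, hm0, hm1, hm2, hm3]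
    have hn1 : ‖(-(1 + Complex.I)/4 : ℂ)‖ ^ 2 = 1/8 := by
      rw [Complex.sq_norm]
      simp [Complex.normSq_apply]
      norm_num
    have hn2 : ‖((-1 + Complex.I)/4 : ℂ)‖ ^ 2 = 1/8 := by
      rw [Complex.sq_norm]
      simp [Complex.normSq_apply]
      norm_num
    have hq : ‖(-1/4 : ℂ)‖ = 1/4 := by
      rw [show (-1/4 : ℂ) = -(1/4) by norm_num, norm_neg]
      simp [norm_div]
    have hq' : ‖(1/4 : ℂ)‖ = 1/4 := by simp [norm_div]
    have e0 : ‖-(1 + Complex.I)/4 * w 1 + (-1/4) * w 2‖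
        ≤ ‖(-(1 + Complex.I)/4 : ℂ)‖ * ‖w 1‖ + (1/4) * ‖w 2‖ := by
      refine (norm_add_le _ _).trans ?_
      rw [norm_mul, norm_mul, hq]
    have e1 : ‖(1/4 : ℂ) * w 2 + (-1 + Complex.I)/4 * w 3‖
        ≤ (1/4) * ‖w 2‖ + ‖((-1 + Complex.I)/4 : ℂ)‖ * ‖w 3‖ := by
      refine (norm_add_le _ _).trans ?_
      rw [norm_mul, norm_mul, hq']
    have e2 : ‖(1/4 : ℂ) * w 3‖ = (1/4) * ‖w 3‖ := by
      rw [norm_mul, hq']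
    have b0 : ‖-(1 + Complex.I)/4 * w 1 + (-1/4) * w 2‖ ^ 2
        ≤ 1/4 * ‖w 1‖^2 + 1/8 * ‖w 2‖^2 := by
      nlinarith [e0, hn1, norm_nonneg (-(1 + Complex.I)/4 * w 1 + (-1/4) * w 2),
        norm_nonneg (w 1), norm_nonneg (w 2),
        norm_nonneg (-(1 + Complex.I)/4 : ℂ),
        sq_nonneg (‖(-(1 + Complex.I)/4 : ℂ)‖ * ‖w 1‖ - (1/4) * ‖w 2‖)]
    have b1 : ‖(1/4 : ℂ) * w 2 + (-1 + Complex.I)/4 * w 3‖ ^ 2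
        ≤ 1/8 * ‖w 2‖^2 + 1/4 * ‖w 3‖^2 := by
      nlinarith [e1, hn2, norm_nonneg ((1/4 : ℂ) * w 2 + (-1 + Complex.I)/4 * w 3),
        norm_nonneg (w 2), norm_nonneg (w 3),
        norm_nonneg ((-1 + Complex.I)/4 : ℂ),
        sq_nonneg ((1/4) * ‖w 2‖ - ‖((-1 + Complex.I)/4 : ℂ)‖ * ‖w 3‖)]
    have key : ‖-(1 + Complex.I)/4 * w 1 + (-1/4) * w 2‖ ^ 2
        + ‖(1/4 : ℂ) * w 2 + (-1 + Complex.I)/4 * w 3‖ ^ 2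
        + ‖(1/4 : ℂ) * w 3‖ ^ 2 + ‖(0 : ℂ)‖ ^ 2
        ≤ (7/8) ^ 2 * (‖w 0‖^2 + ‖w 1‖^2 + ‖w 2‖^2 + ‖w 3‖^2) := by
      rw [norm_zero, e2]
      nlinarith [b0, b1, sq_nonneg ‖w 0‖, sq_nonneg ‖w 1‖, sq_nonneg ‖w 2‖, sq_nonneg ‖w 3‖]
    calc Real.sqrt (‖-(1 + Complex.I)/4 * w 1 + (-1/4) * w 2‖ ^ 2
          + ‖(1/4 : ℂ) * w 2 + (-1 + Complex.I)/4 * w 3‖ ^ 2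
          + ‖(1/4 : ℂ) * w 3‖ ^ 2 + ‖(0 : ℂ)‖ ^ 2)
        ≤ Real.sqrt ((7/8) ^ 2 * (‖w 0‖^2 + ‖w 1‖^2 + ‖w 2‖^2 + ‖w 3‖^2)) :=
          Real.sqrt_le_sqrt key
      _ = 7/8 * Real.sqrt (‖w 0‖^2 + ‖w 1‖^2 + ‖w 2‖^2 + ‖w 3‖^2) := by
          rw [Real.sqrt_mul (by positivity), Real.sqrt_sq (by norm_num)]
  linarith

set_option maxHeartbeats 1000000 in
lemma Pfun_Cex (x y : ℂ) :
    Pfun Cex x y = 1 - (7/16) * (x * y) + (1/32) * (x * y) ^ 2 := by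
  rw [Pfun, det_fin_four']
  simp [Cex, Matrix.sub_apply, Matrix.smul_apply, Matrix.one_apply,
    Matrix.conjTranspose_apply, Matrix.vecHead, Matrix.vecTail, map_ofNat]
  linear_combination (x*y/8 - x^2*y^2/64) * Complex.I_sq

set_option maxHeartbeats 1000000 in
lemma Qfun_Cex_one_one : Qfun Cex 1 1 = 67/2048 := by
  rw [Qfun, det_fin_four']
  simp [Cex, Matrix.sub_apply, Matrix.smul_apply, Matrix.one_apply, Matrix.mul_apply,
    Fin.sum_univ_four, Matrix.conjTranspose_apply, Matrix.vecHead, Matrix.vecTail, map_ofNat]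
  linear_combination (-71/4096 : ℂ) * Complex.I_sq

set_option maxHeartbeats 1000000 in
lemma Qfun_Cex_two_half : Qfun Cex 2 (1/2) = 17/512 + (3/2048) * Complex.I := by
  rw [Qfun, det_fin_four']
  simp [Cex, Matrix.sub_apply, Matrix.smul_apply, Matrix.one_apply, Matrix.mul_apply,
    Fin.sum_univ_four, Matrix.conjTranspose_apply, Matrix.vecHead, Matrix.vecTail, map_ofNat]
  linear_combination (-73/4096 - (3/2048) * Complex.I) * Complex.I_sq

set_option maxHeartbeats 1000000 in
theorem stmt13 :
    IsNilpotent Cex ∧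
    ‖Matrix.toEuclideanCLM (𝕜 := ℂ) Cex‖ < 1 ∧
    (∀ x y : ℂ, Pfun Cex x y = 1 - (7/16) * (x * y) + (1/32) * (x * y) ^ 2) ∧
    ¬ (∃ q : Polynomial ℂ, ∀ x y : ℂ, Qfun Cex x y = q.eval (x * y)) := by
  refine ⟨Cex_nilpotent, Cex_norm_lt_one, Pfun_Cex, ?_⟩
  rintro ⟨q, hq⟩
  have h1 := hq 1 1
  have h2 := hq 2 (1/2)
  rw [Qfun_Cex_one_one] at h1
  rw [Qfun_Cex_two_half] at h2
  rw [show ((2:ℂ) * (1/2)) = 1*1 by norm_num] at h2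
  rw [← h1] at h2
  have him := congrArg Complex.im h2
  simp [Complex.ext_iff] at h2
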